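/- For the simple walk step set S = {(1,0),(−1,0),(0,1),(0,−1)} and z ∈ (0,1/4), define d(x;z) = (z(x²+1)−x)² − 4z²x², whose four real roots are x₁(z) = ((1+2z)−√(1+4z))/(2z), x₂(z) = ((1−2z)−√(1−4z))/(2z), x₃(z) = ((1−2z)+√(1−4z))/(2z), x₄(z) = ((1+2z)+√(1+4z))/(2z), satisfying 0 < x₁(z) < x₂(z) < 1 < x₃(z) < x₄(z). Then for every z ∈ (0,1/4), ∫_{x₂(z)}^{x₃(z)} dx/√(d(x;z)) = 2 · ∫_{−1}^{x₁(z)} dx/√(d(x;z)); that is, the period ratio ω₂(z)/ω₃(z) equals 2 for all z ∈ (0,1/4). -/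

import Mathlib

/-!
Split `∫_{x₂}^{x₃}` at `1`. Since `d(·;z)` is palindromic, `x⁴ d(1/x) = d(x)`, so `x ↦ 1/x`
preserves the differential `dx/√d` and carries `(x₂,1)` onto `(1,x₃)`. A Möbius involution
`ψ(x) = (kx − 1)/(x − k)` that exchanges `x₁ ↔ x₂` and `x₃ ↔ x₄` maps the roots of `d` to roots,
so `(x − k)⁴ d(ψ x) = (1 − k²)² d(x)`; it too preserves `dx/√d`, and it carries `(−1,x₁)` onto
`(x₂,1)` because `ψ(−1) = 1`. Hence both halves equal `∫_{−1}^{x₁} dx/√d`, which is finite since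
`x₁` is a simple zero of `d`.
-/


/-- The discriminant `d(x; z) = (z(x²+1) − x)² − 4z²x²` of the kernel of the simple walk,
with step set `S = {(1,0),(−1,0),(0,1),(0,−1)}`. -/
def dSimple (z x : ℝ) : ℝ := (z * (x ^ 2 + 1) - x) ^ 2 - 4 * z ^ 2 * x ^ 2

/-- The branch point `x₁(z) = ((1+2z) − √(1+4z))/(2z)` of the simple walk. -/
noncomputable def sx1 (z : ℝ) : ℝ := ((1 + 2 * z) - Real.sqrt (1 + 4 * z)) / (2 * z)

/-- The branch point `x₂(z) = ((1−2z) − √(1−4z))/(2z)` of the simple walk. -/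
noncomputable def sx2 (z : ℝ) : ℝ := ((1 - 2 * z) - Real.sqrt (1 - 4 * z)) / (2 * z)

/-- The branch point `x₃(z) = ((1−2z) + √(1−4z))/(2z)` of the simple walk. -/
noncomputable def sx3 (z : ℝ) : ℝ := ((1 - 2 * z) + Real.sqrt (1 - 4 * z)) / (2 * z)

/-- The branch point `x₄(z) = ((1+2z) + √(1+4z))/(2z)` of the simple walk. -/
noncomputable def sx4 (z : ℝ) : ℝ := ((1 + 2 * z) + Real.sqrt (1 + 4 * z)) / (2 * z)

open Set MeasureTheory

section Substitution

variable {P g g' : ℝ → ℝ}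

theorem abs_mul_one_div_sqrt_comp_eq {x : ℝ} (hg' : g' x ≠ 0)
    (hP : P (g x) = g' x ^ 2 * P x) :
    |g' x| * (1 / √(P (g x))) = 1 / √(P x) := by
  rw [hP, Real.sqrt_mul (sq_nonneg _), Real.sqrt_sq_eq_abs, one_div, mul_inv,
    ← mul_assoc, mul_inv_cancel₀ (abs_ne_zero.mpr hg'), one_mul, one_div]

variable {s : Set ℝ}

theorem integral_image_one_div_sqrt (hs : MeasurableSet s)
    (hg : ∀ x ∈ s, HasDerivWithinAt g (g' x) s x) (hinj : InjOn g s)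
    (hg' : ∀ x ∈ s, g' x ≠ 0) (hP : ∀ x ∈ s, P (g x) = g' x ^ 2 * P x) :
    ∫ x in g '' s, 1 / √(P x) = ∫ x in s, 1 / √(P x) := by
  rw [integral_image_eq_integral_abs_deriv_smul hs hg hinj]
  exact setIntegral_congr_fun hs fun x hx => abs_mul_one_div_sqrt_comp_eq (hg' x hx) (hP x hx)

theorem integrableOn_image_one_div_sqrt_iff (hs : MeasurableSet s)
    (hg : ∀ x ∈ s, HasDerivWithinAt g (g' x) s x) (hinj : InjOn g s)
    (hg' : ∀ x ∈ s, g' x ≠ 0) (hP : ∀ x ∈ s, P (g x) = g' x ^ 2 * P x) :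
    IntegrableOn (fun x => 1 / √(P x)) (g '' s) ↔ IntegrableOn (fun x => 1 / √(P x)) s := by
  rw [integrableOn_image_iff_integrableOn_abs_deriv_smul hs hg hinj]
  exact integrableOn_congr_fun
    (fun x hx => abs_mul_one_div_sqrt_comp_eq (hg' x hx) (hP x hx)) hs

variable {a b : ℝ}

theorem strictAntiOn_Icc_of_hasDerivAt_neg (hg : ∀ x ∈ Icc a b, HasDerivAt g (g' x) x)
    (hneg : ∀ x ∈ Ioo a b, g' x < 0) : StrictAntiOn g (Icc a b) :=
  strictAntiOn_of_hasDerivWithinAt_neg (f' := g') (convex_Icc a b)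
    (fun x hx => (hg x hx).continuousAt.continuousWithinAt)
    (fun x hx => by
      rw [interior_Icc] at hx ⊢
      exact (hg x (Ioo_subset_Icc_self hx)).hasDerivWithinAt)
    (by simpa only [interior_Icc] using hneg)

theorem image_Ioo_of_hasDerivAt_neg (hab : a ≤ b) (hg : ∀ x ∈ Icc a b, HasDerivAt g (g' x) x)
    (hneg : ∀ x ∈ Ioo a b, g' x < 0) : g '' Ioo a b = Ioo (g b) (g a) :=
  ContinuousOn.image_Ioo_of_strictAntiOn hab
    (fun x hx => (hg x hx).continuousAt.continuousWithinAt)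
    (strictAntiOn_Icc_of_hasDerivAt_neg hg hneg)

theorem intervalIntegrable_iff_and_integral_eq_of_deriv_neg (hab : a ≤ b)
    (hg : ∀ x ∈ Icc a b, HasDerivAt g (g' x) x) (hneg : ∀ x ∈ Ioo a b, g' x < 0)
    (hP : ∀ x ∈ Ioo a b, P (g x) = g' x ^ 2 * P x) :
    (IntervalIntegrable (fun x => 1 / √(P x)) volume (g b) (g a) ↔
      IntervalIntegrable (fun x => 1 / √(P x)) volume a b) ∧
    ∫ x in g b..g a, 1 / √(P x) = ∫ x in a..b, 1 / √(P x) := by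
  have hanti := strictAntiOn_Icc_of_hasDerivAt_neg hg hneg
  have hgab : g b ≤ g a := hanti.antitoneOn (left_mem_Icc.2 hab) (right_mem_Icc.2 hab) hab
  have hderiv : ∀ x ∈ Ioo a b, HasDerivWithinAt g (g' x) (Ioo a b) x :=
    fun x hx => (hg x (Ioo_subset_Icc_self hx)).hasDerivWithinAt
  have hinj : InjOn g (Ioo a b) := hanti.injOn.mono Ioo_subset_Icc_self
  have hne : ∀ x ∈ Ioo a b, g' x ≠ 0 := fun x hx => (hneg x hx).ne
  constructor
  · rw [intervalIntegrable_iff_integrableOn_Ioo_of_le hab,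
      intervalIntegrable_iff_integrableOn_Ioo_of_le hgab,
      ← image_Ioo_of_hasDerivAt_neg hab hg hneg]
    exact integrableOn_image_one_div_sqrt_iff measurableSet_Ioo hderiv hinj hne hP
  · rw [intervalIntegral.integral_of_le hab, intervalIntegral.integral_of_le hgab,
      integral_Ioc_eq_integral_Ioo, integral_Ioc_eq_integral_Ioo,
      ← image_Ioo_of_hasDerivAt_neg hab hg hneg]
    exact integral_image_one_div_sqrt measurableSet_Ioo hderiv hinj hne hP

end Substitution

theorem integrableOn_Ioo_one_div_sqrt_of_mul_sub_le {P : ℝ → ℝ} (hP : Measurable P)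
    {C a b : ℝ} (hC : 0 < C) (hle : ∀ x ∈ Ioo a b, C * (b - x) ≤ P x) :
    IntegrableOn (fun x => 1 / √(P x)) (Ioo a b) := by
  have hdom : IntegrableOn (fun x => (√C)⁻¹ * (b - x) ^ (-(1 / 2) : ℝ)) (Ioo a b) := by
    refine (IntegrableOn.mono_set ?_ Ioo_subset_Ioc_self).const_mul _
    rcases le_or_gt a b with hab | hba
    · rw [← intervalIntegrable_iff_integrableOn_Ioc_of_le hab]
      simpa using ((intervalIntegral.intervalIntegrable_rpow' (a := 0) (b := b - a)
        (by norm_num : (-1 : ℝ) < -(1 / 2))).comp_sub_left b).symm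
    · simp [Ioc_eq_empty (lt_asymm hba)]
  refine hdom.mono' (measurable_const.div hP.sqrt).aestronglyMeasurable
    ((ae_restrict_iff' measurableSet_Ioo).2 ?_)
  filter_upwards with x hx
  have hpos : 0 < b - x := sub_pos.2 hx.2
  rw [Real.norm_eq_abs, abs_of_nonneg (by positivity), Real.rpow_neg hpos.le,
    ← Real.sqrt_eq_rpow, ← mul_inv, ← Real.sqrt_mul hC.le, one_div]
  exact inv_anti₀ (by positivity) (Real.sqrt_le_sqrt (hle x hx))

theorem hasDerivAt_mobius_involution {k x : ℝ} (hx : x ≠ k) :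
    HasDerivAt (fun u => (k * u - 1) / (u - k)) ((1 - k ^ 2) / (x - k) ^ 2) x := by
  have hnum : HasDerivAt (fun u => k * u - 1) k x := by
    simpa using ((hasDerivAt_id' x).const_mul k).sub_const 1
  exact (hnum.div ((hasDerivAt_id' x).sub_const k) (sub_ne_zero.2 hx)).congr_deriv (by ring)

theorem mobius_involution_neg_one {k : ℝ} (hk : k ≠ -1) : (k * -1 - 1) / (-1 - k) = 1 := by
  rw [div_eq_one_iff_eq]
  · ring
  · contrapose! hk; linarith

theorem palindromic_quadratic_eq_mul {c s r : ℝ} (hc : c ≠ 0) (hr : r ^ 2 = s ^ 2 - 4 * c ^ 2)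
    (x : ℝ) : c * x ^ 2 - s * x + c = c * ((x - (s - r) / (2 * c)) * (x - (s + r) / (2 * c))) := by
  field_simp
  linear_combination hr

theorem dSimple_eq_mul (z x : ℝ) :
    dSimple z x = (z * x ^ 2 - (1 + 2 * z) * x + z) * (z * x ^ 2 - (1 - 2 * z) * x + z) := by
  unfold dSimple; ring

theorem dSimple_inv (z : ℝ) {x : ℝ} (hx : x ≠ 0) :
    dSimple z x⁻¹ = (-(x ^ 2)⁻¹) ^ 2 * dSimple z x := by
  unfold dSimple; field_simp; ring

theorem dSimple_mobius {z k x : ℝ} (hk : 2 * z * k ^ 2 - k + 2 * z = 0) (hx : x ≠ k) :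
    dSimple z ((k * x - 1) / (x - k)) = ((1 - k ^ 2) / (x - k) ^ 2) ^ 2 * dSimple z x := by
  have hxk : x - k ≠ 0 := sub_ne_zero.2 hx
  unfold dSimple
  field_simp
  linear_combination (-k + 2 * x + 2 * x * k ^ 2 - 6 * x ^ 2 * k + 2 * x ^ 3 + 2 * x ^ 3 * k ^ 2
    - x ^ 4 * k) * hk

-- The pole of the involution `x ↦ (k x - 1)/(x - k)` exchanging `x₁ ↔ x₂` and `x₃ ↔ x₄`.
noncomputable def sk (z : ℝ) : ℝ :=
  (√(1 + 4 * z) + √(1 - 4 * z)) / (√(1 + 4 * z) - √(1 - 4 * z))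

section SimpleWalk

variable {z : ℝ}

theorem dSimple_eq_prod (hz : z ∈ Ioo (0 : ℝ) (1 / 4)) (x : ℝ) :
    dSimple z x = z ^ 2 * ((x - sx1 z) * (x - sx2 z) * (x - sx3 z) * (x - sx4 z)) := by
  have hz0 : z ≠ 0 := hz.1.ne'
  rw [dSimple_eq_mul,
    palindromic_quadratic_eq_mul (s := 1 + 2 * z) (r := √(1 + 4 * z)) hz0
      (by rw [Real.sq_sqrt (by linarith [hz.1])]; ring),
    palindromic_quadratic_eq_mul (s := 1 - 2 * z) (r := √(1 - 4 * z)) hz0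
      (by rw [Real.sq_sqrt (by linarith [hz.2])]; ring)]
  unfold sx1 sx2 sx3 sx4
  ring

theorem sx1_eq (hz : z ∈ Ioo (0 : ℝ) (1 / 4)) :
    sx1 z = (√(1 + 4 * z) - 1) / (√(1 + 4 * z) + 1) := by
  have ha := Real.sq_sqrt (by linarith [hz.1] : (0 : ℝ) ≤ 1 + 4 * z)
  rw [sx1, div_eq_div_iff (by linarith [hz.1]) (by positivity)]
  linear_combination -ha

theorem sx2_eq (hz : z ∈ Ioo (0 : ℝ) (1 / 4)) :
    sx2 z = (1 - √(1 - 4 * z)) / (1 + √(1 - 4 * z)) := by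
  have hb := Real.sq_sqrt (by linarith [hz.2] : (0 : ℝ) ≤ 1 - 4 * z)
  rw [sx2, div_eq_div_iff (by linarith [hz.1]) (by positivity)]
  linear_combination -hb

theorem sx3_eq (hz : z ∈ Ioo (0 : ℝ) (1 / 4)) :
    sx3 z = (1 + √(1 - 4 * z)) / (1 - √(1 - 4 * z)) := by
  have hb := Real.sq_sqrt (by linarith [hz.2] : (0 : ℝ) ≤ 1 - 4 * z)
  have hb1 : √(1 - 4 * z) < 1 := by rw [Real.sqrt_lt' one_pos]; linarith [hz.1]
  rw [sx3, div_eq_div_iff (by linarith [hz.1]) (by linarith)]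
  linear_combination -hb

theorem sx4_eq (hz : z ∈ Ioo (0 : ℝ) (1 / 4)) :
    sx4 z = (√(1 + 4 * z) + 1) / (√(1 + 4 * z) - 1) := by
  have ha := Real.sq_sqrt (by linarith [hz.1] : (0 : ℝ) ≤ 1 + 4 * z)
  have ha1 : 1 < √(1 + 4 * z) := by rw [Real.lt_sqrt zero_le_one]; linarith [hz.1]
  rw [sx4, div_eq_div_iff (by linarith [hz.1]) (by linarith)]
  linear_combination ha

theorem sx_ordered (hz : z ∈ Ioo (0 : ℝ) (1 / 4)) :
    0 < sx1 z ∧ sx1 z < sx2 z ∧ sx2 z < 1 ∧ 1 < sx3 z ∧ sx3 z < sx4 z := by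
  rw [sx1_eq hz, sx2_eq hz, sx3_eq hz, sx4_eq hz]
  set a := √(1 + 4 * z)
  set b := √(1 - 4 * z)
  have ha1 : 1 < a := by rw [Real.lt_sqrt zero_le_one]; linarith [hz.1]
  have hb0 : 0 < b := Real.sqrt_pos.2 (by linarith [hz.2])
  have hb1 : b < 1 := by rw [Real.sqrt_lt' one_pos]; linarith [hz.1]
  have hab : a * b < 1 := by
    rw [← Real.sqrt_mul (by linarith [hz.1]), Real.sqrt_lt' one_pos]
    nlinarith [hz.1]
  refine ⟨div_pos (by linarith) (by linarith), ?_, ?_, ?_, ?_⟩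
  · rw [div_lt_div_iff₀ (by positivity) (by positivity)]; nlinarith
  · rw [div_lt_one (by positivity)]; linarith
  · rw [one_lt_div (by linarith)]; linarith
  · rw [div_lt_div_iff₀ (by linarith) (by linarith)]; nlinarith

theorem sqrt_one_sub_lt_sqrt_one_add (hz : z ∈ Ioo (0 : ℝ) (1 / 4)) :
    √(1 - 4 * z) < √(1 + 4 * z) :=
  Real.sqrt_lt_sqrt (by linarith [hz.2]) (by linarith [hz.1])

theorem one_lt_sk (hz : z ∈ Ioo (0 : ℝ) (1 / 4)) : 1 < sk z := by
  have hb0 : 0 < √(1 - 4 * z) := Real.sqrt_pos.2 (by linarith [hz.2])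
  have hba := sqrt_one_sub_lt_sqrt_one_add hz
  rw [sk, one_lt_div (by linarith)]
  linarith

theorem sk_quadratic (hz : z ∈ Ioo (0 : ℝ) (1 / 4)) : 2 * z * sk z ^ 2 - sk z + 2 * z = 0 := by
  have ha := Real.sq_sqrt (by linarith [hz.1] : (0 : ℝ) ≤ 1 + 4 * z)
  have hb := Real.sq_sqrt (by linarith [hz.2] : (0 : ℝ) ≤ 1 - 4 * z)
  have hab := (sub_pos.2 (sqrt_one_sub_lt_sqrt_one_add hz)).ne'
  rw [sk]
  set a := √(1 + 4 * z)
  set b := √(1 - 4 * z)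
  field_simp
  linear_combination (4 * z - 1) * ha + (4 * z + 1) * hb

theorem mobius_sk_sx1 (hz : z ∈ Ioo (0 : ℝ) (1 / 4)) :
    (sk z * sx1 z - 1) / (sx1 z - sk z) = sx2 z := by
  obtain ⟨-, h12, h21, -, -⟩ := sx_ordered hz
  have hab := (sub_pos.2 (sqrt_one_sub_lt_sqrt_one_add hz)).ne'
  rw [div_eq_iff (by linarith [one_lt_sk hz]), sx1_eq hz, sx2_eq hz, sk]
  field_simp
  ring

theorem mobius_sk_substitution (hz : z ∈ Ioo (0 : ℝ) (1 / 4)) :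
    (IntervalIntegrable (fun x => 1 / √(dSimple z x)) volume (sx2 z) 1 ↔
      IntervalIntegrable (fun x => 1 / √(dSimple z x)) volume (-1) (sx1 z)) ∧
    ∫ x in sx2 z..1, 1 / √(dSimple z x) = ∫ x in (-1)..sx1 z, 1 / √(dSimple z x) := by
  obtain ⟨h1, h12, h21, -, -⟩ := sx_ordered hz
  have hk := one_lt_sk hz
  have hsubst := intervalIntegrable_iff_and_integral_eq_of_deriv_neg (P := dSimple z)
    (g := fun u => (sk z * u - 1) / (u - sk z)) (g' := fun x => (1 - sk z ^ 2) / (x - sk z) ^ 2)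
    (a := -1) (b := sx1 z) (by linarith)
    (fun x hx => hasDerivAt_mobius_involution (by linarith [hx.2]))
    (fun x hx => div_neg_of_neg_of_pos (by nlinarith) (sq_pos_of_neg (by linarith [hx.2])))
    (fun x hx => dSimple_mobius (sk_quadratic hz) (by linarith [hx.2]))
  simpa only [mobius_sk_sx1 hz, mobius_involution_neg_one (by linarith : sk z ≠ -1)] using hsubst

theorem inv_substitution (hz : z ∈ Ioo (0 : ℝ) (1 / 4)) :
    (IntervalIntegrable (fun x => 1 / √(dSimple z x)) volume 1 (sx3 z) ↔
      IntervalIntegrable (fun x => 1 / √(dSimple z x)) volume (sx2 z) 1) ∧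
    ∫ x in (1 : ℝ)..sx3 z, 1 / √(dSimple z x) = ∫ x in sx2 z..1, 1 / √(dSimple z x) := by
  obtain ⟨h1, h12, h21, -, -⟩ := sx_ordered hz
  have hsubst := intervalIntegrable_iff_and_integral_eq_of_deriv_neg (P := dSimple z)
    (g := (·⁻¹)) (g' := fun x => -(x ^ 2)⁻¹) h21.le
    (fun x hx => hasDerivAt_inv (by linarith [hx.1]))
    (fun x hx => neg_neg_of_pos (inv_pos.2 (pow_pos (by linarith [hx.1]) 2)))
    (fun x hx => dSimple_inv z (by linarith [hx.1]))
  have hx3 : (sx2 z)⁻¹ = sx3 z := by rw [sx2_eq hz, sx3_eq hz, inv_div]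
  simpa only [inv_one, hx3] using hsubst

theorem mul_sub_le_dSimple (hz : z ∈ Ioo (0 : ℝ) (1 / 4)) {x : ℝ} (hx : x < sx1 z) :
    z ^ 2 * ((sx2 z - sx1 z) * (sx3 z - sx1 z) * (sx4 z - sx1 z)) * (sx1 z - x) ≤
      dSimple z x := by
  obtain ⟨-, h12, h21, h13, h34⟩ := sx_ordered hz
  have hprod : dSimple z x =
      z ^ 2 * ((sx2 z - x) * (sx3 z - x) * (sx4 z - x)) * (sx1 z - x) := by
    rw [dSimple_eq_prod hz]; ring
  rw [hprod]
  gcongr <;> nlinarith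

theorem intervalIntegrable_neg_one_sx1 (hz : z ∈ Ioo (0 : ℝ) (1 / 4)) :
    IntervalIntegrable (fun x => 1 / √(dSimple z x)) volume (-1) (sx1 z) := by
  obtain ⟨h1, h12, h21, h13, h34⟩ := sx_ordered hz
  rw [intervalIntegrable_iff_integrableOn_Ioo_of_le (by linarith)]
  refine integrableOn_Ioo_one_div_sqrt_of_mul_sub_le (by unfold dSimple; fun_prop) ?_
    (fun x hx => mul_sub_le_dSimple hz hx.2)
  exact mul_pos (pow_pos hz.1 2) (mul_pos (mul_pos (by linarith) (by linarith)) (by linarith))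

end SimpleWalk

/-- For the simple walk and every `z ∈ (0,1/4)`: `x₁(z), x₂(z), x₃(z), x₄(z)` are roots of
`d(·;z)`, satisfy `0 < x₁ < x₂ < 1 < x₃ < x₄`, and
`∫_{x₂}^{x₃} dx/√d = 2 ∫_{−1}^{x₁} dx/√d`; that is, the period ratio `ω₂(z)/ω₃(z)` equals
`2` for all `z ∈ (0,1/4)`. -/
theorem simple_walk_period_ratio :
    ∀ z ∈ Set.Ioo (0 : ℝ) (1 / 4),
      dSimple z (sx1 z) = 0 ∧ dSimple z (sx2 z) = 0 ∧ dSimple z (sx3 z) = 0 ∧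
      dSimple z (sx4 z) = 0 ∧
      0 < sx1 z ∧ sx1 z < sx2 z ∧ sx2 z < 1 ∧ 1 < sx3 z ∧ sx3 z < sx4 z ∧
      (∫ x in sx2 z..sx3 z, 1 / Real.sqrt (dSimple z x)) =
        2 * ∫ x in (-1 : ℝ)..(sx1 z), 1 / Real.sqrt (dSimple z x) := by
  intro z hz
  obtain ⟨hψi, hψ⟩ := mobius_sk_substitution hz
  obtain ⟨hinvi, hinv⟩ := inv_substitution hz
  have hint := hψi.2 (intervalIntegrable_neg_one_sx1 hz)
  obtain ⟨h1, h12, h21, h13, h34⟩ := sx_ordered hz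
  refine ⟨by simp [dSimple_eq_prod hz], by simp [dSimple_eq_prod hz],
    by simp [dSimple_eq_prod hz], by simp [dSimple_eq_prod hz], h1, h12, h21, h13, h34, ?_⟩
  rw [← intervalIntegral.integral_add_adjacent_intervals hint (hinvi.2 hint), hinv, hψ]
  ring
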